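/- arXiv:2108.13325 — 2 statements merged into one kernel-verified Lean document; each statement's English description precedes it below -/
import Mathlib

section
/- If a finite group G contains an abelian subgroup A of index n, then G contains a normal abelian subgroup of index at most n². Consequently, for any group Γ, the Jordan constant satisfies j(Γ) ≤ j_w(Γ)². -/
/-!
Chermak–Delgado. The measure `m(H) = |H| |C_G(H)|` is supermodular,
`m(H) m(K) ≤ m(H ⊔ K) m(H ⊓ K)`, so the subgroups of maximal measure are closed under `⊓`;
they are also closed under `C_G(-)` and permuted by automorphisms. Hence the least of them, `M`, is
characteristic, and `M ≤ M ⊓ C_G(M)` makes it abelian. For an abelian `A`,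
`|A|² ≤ m(A) ≤ m(M) ≤ |M| |G|`, which is `|G : M| ≤ |G : A|²`.
-/

namespace Subgroup

variable {G G' : Type*} [Group G] [Group G']

theorem centralizer_sup (H K : Subgroup G) :
    centralizer ((H ⊔ K : Subgroup G) : Set G) = centralizer H ⊓ centralizer K :=
  le_antisymm (le_inf (centralizer_le (SetLike.coe_mono le_sup_left))
      (centralizer_le (SetLike.coe_mono le_sup_right)))
    (le_centralizer_iff.mpr (sup_le (le_centralizer_iff.mp inf_le_left)
      (le_centralizer_iff.mp inf_le_right)))

theorem centralizer_map_equiv (e : G ≃* G') (H : Subgroup G) :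
    centralizer (H.map e.toMonoidHom : Set G') = (centralizer H).map e.toMonoidHom := by
  ext x
  simp only [mem_centralizer_iff, mem_map_equiv, coe_map, Set.forall_mem_image]
  refine forall₂_congr fun h _ ↦ ?_
  rw [← e.symm.injective.eq_iff, map_mul, map_mul]
  simp

theorem card_mul_card_le_card_sup_mul_card_inf [Finite G] (H K : Subgroup G) :
    Nat.card H * Nat.card K ≤ Nat.card ↥(H ⊔ K) * Nat.card ↥(H ⊓ K) := by
  have hK : Nat.card ↥(H ⊓ K) * H.relIndex K = Nat.card K := by
    rw [← relIndex_bot_left, ← inf_relIndex_right H K,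
      relIndex_mul_relIndex _ _ _ bot_le inf_le_right, relIndex_bot_left]
  have hsup : Nat.card H * H.relIndex (H ⊔ K) = Nat.card ↥(H ⊔ K) := by
    rw [← relIndex_bot_left, relIndex_mul_relIndex _ _ _ bot_le le_sup_left, relIndex_bot_left]
  have hle : H.relIndex K ≤ H.relIndex (H ⊔ K) :=
    relIndex_le_of_le_right le_sup_right index_ne_zero_of_finite
  rw [← hK, ← hsup]
  calc _ = Nat.card H * H.relIndex K * Nat.card ↥(H ⊓ K) := by ring
    _ ≤ _ := by gcongr

noncomputable def cdMeasure (H : Subgroup G) : ℕ :=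
  Nat.card H * Nat.card (centralizer (H : Set G))

theorem cdMeasure_map_equiv (e : G ≃* G') (H : Subgroup G) :
    cdMeasure (H.map e.toMonoidHom) = cdMeasure H := by
  rw [cdMeasure, cdMeasure, centralizer_map_equiv, card_map_of_injective e.injective,
    card_map_of_injective e.injective]

theorem cdMeasure_le_cdMeasure_centralizer [Finite G] (H : Subgroup G) :
    cdMeasure H ≤ cdMeasure (centralizer (H : Set G)) := by
  rw [cdMeasure, cdMeasure, mul_comm]
  exact Nat.mul_le_mul_left _ (card_le_of_le (le_centralizer_iff.mp le_rfl))

theorem card_sq_le_cdMeasure [Finite G] (A : Subgroup G) [IsMulCommutative A] :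
    Nat.card A ^ 2 ≤ cdMeasure A := by
  rw [sq, cdMeasure]
  exact Nat.mul_le_mul_left _ (card_le_of_le (le_centralizer A))

theorem cdMeasure_mul_cdMeasure_le [Finite G] (H K : Subgroup G) :
    cdMeasure H * cdMeasure K ≤ cdMeasure (H ⊔ K) * cdMeasure (H ⊓ K) := by
  have hC : Nat.card ↥(centralizer (H : Set G) ⊔ centralizer K) ≤
      Nat.card (centralizer ((H ⊓ K : Subgroup G) : Set G)) :=
    card_le_of_le (sup_le (centralizer_le (SetLike.coe_mono inf_le_left))
      (centralizer_le (SetLike.coe_mono inf_le_right)))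
  calc cdMeasure H * cdMeasure K
      = (Nat.card H * Nat.card K) *
          (Nat.card (centralizer (H : Set G)) * Nat.card (centralizer (K : Set G))) := by
        rw [cdMeasure, cdMeasure]; ring
    _ ≤ (Nat.card ↥(H ⊔ K) * Nat.card ↥(H ⊓ K)) *
          (Nat.card ↥(centralizer (H : Set G) ⊔ centralizer K) *
            Nat.card ↥(centralizer (H : Set G) ⊓ centralizer K)) :=
        Nat.mul_le_mul (card_mul_card_le_card_sup_mul_card_inf H K)
          (card_mul_card_le_card_sup_mul_card_inf _ _)
    _ ≤ (Nat.card ↥(H ⊔ K) * Nat.card ↥(H ⊓ K)) *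
          (Nat.card (centralizer ((H ⊓ K : Subgroup G) : Set G)) *
            Nat.card (centralizer ((H ⊔ K : Subgroup G) : Set G))) := by
        rw [centralizer_sup]; gcongr
    _ = cdMeasure (H ⊔ K) * cdMeasure (H ⊓ K) := by
        rw [cdMeasure, cdMeasure]; ring

/-- Membership in the Chermak–Delgado lattice of `G`. -/
def IsCDMaximal (H : Subgroup G) : Prop :=
  ∀ K : Subgroup G, cdMeasure K ≤ cdMeasure H

namespace IsCDMaximal

variable {H K : Subgroup G}

theorem inf [Finite G] (hH : IsCDMaximal H) (hK : IsCDMaximal K) : IsCDMaximal (H ⊓ K) := by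
  have hpos : 0 < cdMeasure H := Nat.mul_pos Nat.card_pos Nat.card_pos
  have hHK : cdMeasure H ≤ cdMeasure (H ⊓ K) := by
    refine Nat.le_of_mul_le_mul_left ?_ hpos
    calc cdMeasure H * cdMeasure H
        = cdMeasure H * cdMeasure K := by rw [le_antisymm (hH K) (hK H)]
      _ ≤ cdMeasure (H ⊔ K) * cdMeasure (H ⊓ K) := cdMeasure_mul_cdMeasure_le H K
      _ ≤ cdMeasure H * cdMeasure (H ⊓ K) := Nat.mul_le_mul_right _ (hH _)
  exact fun L ↦ (hH L).trans hHK

theorem centralizer [Finite G] (hH : IsCDMaximal H) :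
    IsCDMaximal (Subgroup.centralizer (H : Set G)) :=
  fun L ↦ (hH L).trans (cdMeasure_le_cdMeasure_centralizer H)

theorem map_equiv (hH : IsCDMaximal H) (e : G ≃* G) : IsCDMaximal (H.map e.toMonoidHom) := by
  intro L
  rw [cdMeasure_map_equiv]
  simpa only [cdMeasure_map_equiv, map_symm_eq_iff_map_eq] using hH (L.map e.symm.toMonoidHom)

end IsCDMaximal

theorem exists_isCDMaximal [Finite G] : ∃ H : Subgroup G, IsCDMaximal H :=
  Finite.exists_max cdMeasure

theorem exists_isCDMaximal_le_isCDMaximal [Finite G] :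
    ∃ M : Subgroup G, IsCDMaximal M ∧ ∀ K, IsCDMaximal K → M ≤ K := by
  obtain ⟨M, hM⟩ := exists_minimal_of_wellFoundedLT _ (exists_isCDMaximal (G := G))
  exact ⟨M, hM.prop, fun K hK ↦ (hM.le_of_le (hM.prop.inf hK) inf_le_left).trans inf_le_right⟩

theorem exists_normal_isMulCommutative_index_le_sq [Finite G] (A : Subgroup G)
    [IsMulCommutative A] :
    ∃ B : Subgroup G, B.Normal ∧ IsMulCommutative B ∧ B.index ≤ A.index ^ 2 := by
  obtain ⟨M, hM, hM_le⟩ := exists_isCDMaximal_le_isCDMaximal (G := G)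
  have : M.Characteristic := characteristic_iff_le_map.mpr fun e ↦ hM_le _ (hM.map_equiv e)
  have hM_comm : IsMulCommutative M := le_centralizer_iff_isMulCommutative.mp
    ((hM_le _ (hM.inf hM.centralizer)).trans inf_le_right)
  refine ⟨M, normal_of_characteristic M, hM_comm, ?_⟩
  have hA : Nat.card A ^ 2 ≤ Nat.card M * Nat.card G :=
    (card_sq_le_cdMeasure A).trans ((hM A).trans (Nat.mul_le_mul_left _ (card_le_card_group _)))
  refine Nat.le_of_mul_le_mul_left ?_ (pow_pos (Nat.card_pos (α := A)) 2)
  calc Nat.card A ^ 2 * M.index ≤ Nat.card M * Nat.card G * M.index := by gcongr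
    _ = (Nat.card A * A.index) ^ 2 := by
        rw [mul_right_comm, card_mul_index, A.card_mul_index, sq]
    _ = Nat.card A ^ 2 * A.index ^ 2 := mul_pow ..

end Subgroup

/-- A finite group with an abelian subgroup of index n has a normal
abelian subgroup of index at most n²; consequently j(Γ) ≤ j_w(Γ)². -/
theorem jordan_le_weak_jordan_sq (n j : ℕ) :
    (∀ (G : Type) [Group G] [Finite G] (A : Subgroup G),
        IsMulCommutative A → A.index = n →
        ∃ B : Subgroup G, B.Normal ∧ IsMulCommutative B ∧ B.index ≤ n ^ 2) ∧
    (∀ (Γ : Type) [Group Γ],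
        (∀ G : Subgroup Γ, Finite G →
          ∃ A : Subgroup G, IsMulCommutative A ∧ A.index ≤ j) →
        (∀ G : Subgroup Γ, Finite G →
          ∃ A : Subgroup G, A.Normal ∧ IsMulCommutative A ∧ A.index ≤ j ^ 2)) := by
  open Subgroup in
  refine ⟨fun G _ _ A hA hA_index ↦ hA_index ▸ exists_normal_isMulCommutative_index_le_sq A,
    fun Γ _ hweak G hG ↦ ?_⟩
  obtain ⟨A, hA, hA_index⟩ := hweak G hG
  obtain ⟨B, hB_normal, hB_comm, hB_index⟩ := exists_normal_isMulCommutative_index_le_sq A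
  exact ⟨B, hB_normal, hB_comm, hB_index.trans (Nat.pow_le_pow_left hA_index 2)⟩
end

section
/- Let N be a normal subgroup of a group Γ. If N is Jordan with constant j and Γ/N is bounded with constant b, then Γ is Jordan; explicitly, every finite subgroup G ⊆ Γ contains a normal abelian subgroup of index at most b · j^b. -/
/-!
For finite `G ≤ Γ`, the subgroup `H = G ∩ N` is normal in `G` of index at most `b`, and `N`
provides a normal abelian `A ≤ H` of index at most `j`. Because `H` normalizes `A`, the conjugate
`g A g⁻¹` only depends on the coset `g H`, so the normal core of `A` in `G` is an intersection of
at most `b` conjugates of `A`, each of index at most `j` in the normal subgroup `H`. Its index in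
`G` is therefore at most `b * j ^ b`.
-/

namespace Subgroup

variable {G : Type*} [Group G]

theorem map_conj_mul_of_mem_normalizer {A : Subgroup G} (g : G) {h : G}
    (hh : h ∈ normalizer (A : Set G)) :
    A.map (MulAut.conj (g * h) : G →* G) = A.map (MulAut.conj g : G →* G) := by
  rw [mem_normalizer_iff_map_conj_eq] at hh
  rw [map_mul, MulAut.mul_def, MulEquiv.coe_monoidHom_trans, ← map_map, hh]

theorem normalCore_eq_iInf_map_conj_out {A H : Subgroup G} (hH : H ≤ normalizer (A : Set G)) :
    A.normalCore = ⨅ q : G ⧸ H, A.map (MulAut.conj q.out : G →* G) := by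
  rw [normalCore_eq_iInf_map_conj]
  refine le_antisymm (le_iInf fun q => iInf_le _ q.out) (le_iInf fun g => ?_)
  obtain ⟨h, hg⟩ := QuotientGroup.mk_out_eq_mul H g
  refine iInf_le_of_le (g : G ⧸ H) ?_
  rw [hg, map_conj_mul_of_mem_normalizer g (hH h.2)]

theorem relIndex_normalCore_le_pow {A H : Subgroup G} [H.Normal] [H.FiniteIndex]
    (hH : H ≤ normalizer (A : Set G)) : A.normalCore.relIndex H ≤ A.relIndex H ^ H.index := by
  have := Fintype.ofFinite (G ⧸ H)
  have hconj (g : G) : (A.map (MulAut.conj g : G →* G)).relIndex H = A.relIndex H := by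
    conv_lhs => rw [← Normal.map_conj_eq H g]
    exact relIndex_map_map_of_injective _ _ (MulAut.conj g).injective
  calc A.normalCore.relIndex H
      ≤ ∏ q : G ⧸ H, (A.map (MulAut.conj q.out : G →* G)).relIndex H := by
        rw [normalCore_eq_iInf_map_conj_out hH]; exact relIndex_iInf_le _
    _ = A.relIndex H ^ H.index := by
        simp only [hconj, Finset.prod_const, Finset.card_univ, index_eq_card,
          Nat.card_eq_fintype_card]

theorem index_normalCore_map_subtype_le {H : Subgroup G} [H.Normal] [H.FiniteIndex]
    (A : Subgroup H) [A.Normal] :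
    (A.map H.subtype).normalCore.index ≤ A.index ^ H.index * H.index := by
  have hH : H ≤ normalizer (A.map H.subtype : Set G) := by
    simpa [normalizer_eq_top, ← MonoidHom.range_eq_map] using le_normalizer_map (H := A) H.subtype
  have hrel : (A.map H.subtype).relIndex H = A.index := by
    simpa [← MonoidHom.range_eq_map] using relIndex_map_map_of_injective A ⊤ H.subtype_injective
  rw [← relIndex_mul_index ((normalCore_le _).trans (map_subtype_le A)), ← hrel]
  exact Nat.mul_le_mul_right _ (relIndex_normalCore_le_pow hH)

theorem relIndex_eq_card_map_mk (N : Subgroup G) [N.Normal] (K : Subgroup G) :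
    N.relIndex K = Nat.card (K.map (QuotientGroup.mk' N)) := by
  rw [← relIndex_ker, QuotientGroup.ker_mk']

noncomputable def subgroupOfEquivSubgroupOf (H K : Subgroup G) :
    H.subgroupOf K ≃* K.subgroupOf H :=
  have hinf : (H.subgroupOf K).map K.subtype = (K.subgroupOf H).map H.subtype := by
    rw [subgroupOf_map_subtype, subgroupOf_map_subtype, inf_comm]
  ((equivMapOfInjective _ _ K.subtype_injective).trans (MulEquiv.subgroupCongr hinf)).trans
    (equivMapOfInjective _ _ H.subtype_injective).symm

theorem isMulCommutative_of_le {H K : Subgroup G} (hle : H ≤ K) [IsMulCommutative K] :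
    IsMulCommutative H :=
  .of_setLike_mul_comm fun _ ha _ hb => setLike_mul_comm (hle ha) (hle hb)

end Subgroup

def HasNormalCommSubgroupOfIndexLE (G : Type*) [Group G] (j : ℕ) : Prop :=
  ∃ A : Subgroup G, A.Normal ∧ IsMulCommutative A ∧ A.index ≤ j

namespace HasNormalCommSubgroupOfIndexLE

variable {G G' : Type*} [Group G] [Group G'] {j : ℕ}

theorem of_mulEquiv (e : G ≃* G') (h : HasNormalCommSubgroupOfIndexLE G j) :
    HasNormalCommSubgroupOfIndexLE G' j := by
  obtain ⟨A, hA, hAc, hAj⟩ := h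
  exact ⟨A.map (e : G →* G'), hA.map _ e.surjective, A.map_isMulCommutative _,
    (A.index_map_equiv e).trans_le hAj⟩

theorem of_normal {H : Subgroup G} [H.Normal] [H.FiniteIndex] {b : ℕ} (hb : H.index ≤ b)
    (h : HasNormalCommSubgroupOfIndexLE H j) :
    HasNormalCommSubgroupOfIndexLE G (b * j ^ b) := by
  obtain ⟨A, hA, hAc, hAj⟩ := h
  refine ⟨_, Subgroup.normalCore_normal _,
    Subgroup.isMulCommutative_of_le (Subgroup.normalCore_le (A.map H.subtype)), ?_⟩
  refine (Subgroup.index_normalCore_map_subtype_le A).trans ?_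
  rw [mul_comm b]
  refine Nat.mul_le_mul ((Nat.pow_le_pow_left hAj _).trans ?_) hb
  obtain rfl | hj := j.eq_zero_or_pos
  · rw [zero_pow H.index_ne_zero_of_finite]
    exact Nat.zero_le _
  · exact Nat.pow_le_pow_right hj hb

end HasNormalCommSubgroupOfIndexLE

/-- If N ⊴ Γ is Jordan with constant j and Γ/N is bounded with
constant b, then every finite subgroup of Γ has a normal abelian subgroup of
index at most b·j^b. -/
theorem jordan_of_jordan_by_bounded (Γ : Type*) [Group Γ] (N : Subgroup Γ)
    [N.Normal] (j b : ℕ)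
    (hN : ∀ K : Subgroup N, Finite K →
      ∃ A : Subgroup K, A.Normal ∧ IsMulCommutative A ∧ A.index ≤ j)
    (hQ : ∀ K : Subgroup (Γ ⧸ N), Finite K → Nat.card K ≤ b) :
    ∀ G : Subgroup Γ, Finite G →
      ∃ A : Subgroup G, A.Normal ∧ IsMulCommutative A ∧ A.index ≤ b * j ^ b := by
  intro G hG
  have hb : (N.subgroupOf G).index ≤ b := by
    rw [← Subgroup.relIndex, Subgroup.relIndex_eq_card_map_mk]
    exact hQ _ (.of_surjective _ ((QuotientGroup.mk' N).subgroupMap_surjective G))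
  let e := Subgroup.subgroupOfEquivSubgroupOf G N
  have : Finite (G.subgroupOf N) := Finite.of_equiv _ e.symm.toEquiv
  exact (HasNormalCommSubgroupOfIndexLE.of_mulEquiv e (hN _ this)).of_normal hb
end
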